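/- arXiv:2510.08088 — 7 statements merged into one kernel-verified Lean document; each statement's English description precedes it below -/
import Mathlib

section
/- Let H = fromBlocks H₁₁ H₁₂ H₂₁ H₂₂ be an (d+q)×(d+q) complex block matrix and λ ∈ ℂ such that H₂₂ − λ·1 is invertible. If φ ∈ ℂ^d is a nonzero vector with S(λ) · φ = 0, then the lifted vector Ψ ∈ ℂ^d × ℂ^q with P-component φ and Q-component −(H₂₂ − λ·1)⁻¹ · H₂₁ · φ is nonzero and satisfies (H − λ·1) · Ψ = 0; that is, Ψ = Ω(λ) applied to (φ, 0) is an eigenvector of H with eigenvalue λ. -/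
open Matrix

/-- **Lifting Schur-complement null vectors to eigenvectors.**
If `φ ≠ 0` satisfies `S(λ) φ = 0`, then the lifted vector `Ψ` with `P`-component `φ` and
`Q`-component `-(H₂₂ - λ•1)⁻¹ H₂₁ φ` is a nonzero vector with `(H - λ•1) Ψ = 0`, and `Ψ` is the
image under the wave operator `Ω(λ)` of the vector `(φ, 0)`. -/
theorem schur_null_lifts_to_eigenvector
    (d q : ℕ) (hd : 0 < d) (hq : 0 < q)
    (H₁₁ : Matrix (Fin d) (Fin d) ℂ) (H₁₂ : Matrix (Fin d) (Fin q) ℂ)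
    (H₂₁ : Matrix (Fin q) (Fin d) ℂ) (H₂₂ : Matrix (Fin q) (Fin q) ℂ)
    (lam : ℂ) (hinv : IsUnit (H₂₂ - lam • 1))
    (φ : Fin d → ℂ) (hφ : φ ≠ 0)
    (hS : (H₁₁ - lam • 1 - H₁₂ * (H₂₂ - lam • 1)⁻¹ * H₂₁) *ᵥ φ = 0) :
    Sum.elim φ (-(((H₂₂ - lam • 1)⁻¹ * H₂₁) *ᵥ φ)) ≠ 0 ∧
    (Matrix.fromBlocks H₁₁ H₁₂ H₂₁ H₂₂ - lam • 1) *ᵥ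
        Sum.elim φ (-(((H₂₂ - lam • 1)⁻¹ * H₂₁) *ᵥ φ)) = 0 ∧
    Sum.elim φ (-(((H₂₂ - lam • 1)⁻¹ * H₂₁) *ᵥ φ))
        = (Matrix.fromBlocks (1 : Matrix (Fin d) (Fin d) ℂ) (0 : Matrix (Fin d) (Fin q) ℂ)
            (-((H₂₂ - lam • 1)⁻¹ * H₂₁)) (1 : Matrix (Fin q) (Fin q) ℂ)) *ᵥ Sum.elim φ (0 : Fin q → ℂ) := by
  have hdet : IsUnit (H₂₂ - lam • 1).det := (Matrix.isUnit_iff_isUnit_det _).mp hinv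
  refine ⟨?_, ?_, ?_⟩
  · intro h
    apply hφ
    funext i
    have := congrFun h (Sum.inl i)
    simpa using this
  · have hblock : Matrix.fromBlocks H₁₁ H₁₂ H₂₁ H₂₂ - lam • 1
        = Matrix.fromBlocks (H₁₁ - lam • 1) H₁₂ H₂₁ (H₂₂ - lam • 1) := by
      ext (i|i) (j|j) <;> simp [Matrix.one_apply]
    rw [hblock, Matrix.fromBlocks_mulVec]
    simp only [Sum.elim_comp_inl, Sum.elim_comp_inr]
    have htop : (H₁₁ - lam • 1) *ᵥ φ + H₁₂ *ᵥ -(((H₂₂ - lam • 1)⁻¹ * H₂₁) *ᵥ φ) = 0 := by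
      rw [Matrix.sub_mulVec] at hS
      rw [Matrix.mulVec_neg, Matrix.mulVec_mulVec, ← Matrix.mul_assoc]
      linear_combination hS
    have hbot : H₂₁ *ᵥ φ + (H₂₂ - lam • 1) *ᵥ -(((H₂₂ - lam • 1)⁻¹ * H₂₁) *ᵥ φ) = 0 := by
      rw [Matrix.mulVec_neg, ← Matrix.mulVec_mulVec, Matrix.mulVec_mulVec,
        Matrix.mul_nonsing_inv _ hdet]
      simp
    rw [htop, hbot]
    ext (i|i) <;> rfl
  · rw [Matrix.fromBlocks_mulVec]
    simp [Matrix.neg_mulVec]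
end

section
/- Let H = fromBlocks H₁₁ H₁₂ H₂₁ H₂₂ be an (d+q)×(d+q) complex block matrix and λ ∈ ℂ such that H₂₂ − λ·1 is invertible. Then the dimension (finrank over ℂ) of the kernel of the linear map v ↦ (H − λ·1) · v on ℂ^(d+q) equals the dimension of the kernel of the linear map φ ↦ S(λ) · φ on ℂ^d, where S(λ) = H₁₁ − λ·1 − H₁₂ · (H₂₂ − λ·1)⁻¹ · H₂₁. In particular, the geometric multiplicity of λ as an eigenvalue of H equals the nullity of S(λ). -/
open Matrix

section Aux

variable {d q : ℕ} (A : Matrix (Fin d) (Fin d) ℂ) (B : Matrix (Fin d) (Fin q) ℂ)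
  (C : Matrix (Fin q) (Fin d) ℂ) (D : Matrix (Fin q) (Fin q) ℂ)

lemma schur_mem_ker_iff (hD : IsUnit D) (v : Fin d ⊕ Fin q → ℂ) :
    (fromBlocks A B C D) *ᵥ v = 0 ↔
      (A - B * D⁻¹ * C) *ᵥ (v ∘ Sum.inl) = 0 ∧
        v ∘ Sum.inr = -((D⁻¹ * C) *ᵥ (v ∘ Sum.inl)) := by
  have hDdet : IsUnit D.det := (isUnit_iff_isUnit_det D).mp hD
  have hv : v = Sum.elim (v ∘ Sum.inl) (v ∘ Sum.inr) := (Sum.elim_comp_inl_inr v).symm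
  set x := v ∘ Sum.inl with hx
  set y := v ∘ Sum.inr with hyy
  constructor
  · intro h
    rw [hv, fromBlocks_mulVec] at h
    simp only [Sum.elim_comp_inl, Sum.elim_comp_inr] at h
    have h1 : A *ᵥ x + B *ᵥ y = 0 := funext fun i => congrFun h (Sum.inl i)
    have h2 : C *ᵥ x + D *ᵥ y = 0 := funext fun i => congrFun h (Sum.inr i)
    have hy : y = -((D⁻¹ * C) *ᵥ x) := by
      have := congrArg (fun w => D⁻¹ *ᵥ w) h2
      simp only [mulVec_add, mulVec_mulVec, Matrix.nonsing_inv_mul D hDdet, one_mulVec,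
        mulVec_zero] at this
      rw [eq_neg_of_add_eq_zero_right this, ← mulVec_mulVec]
    refine ⟨?_, hy⟩
    have : B *ᵥ D⁻¹ *ᵥ C *ᵥ x = -(B *ᵥ y) := by rw [hy]; simp [mulVec_mulVec, mulVec_neg]
    rw [Matrix.sub_mulVec, ← mulVec_mulVec, ← mulVec_mulVec, this, sub_neg_eq_add, h1]
  · rintro ⟨hS, hy⟩
    rw [hv, fromBlocks_mulVec]
    simp only [Sum.elim_comp_inl, Sum.elim_comp_inr]
    have hS' : A *ᵥ x = B *ᵥ D⁻¹ *ᵥ C *ᵥ x := by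
      have h0 : A *ᵥ x - B *ᵥ D⁻¹ *ᵥ C *ᵥ x = 0 := by
        simpa [Matrix.sub_mulVec, mulVec_mulVec, Matrix.mul_assoc] using hS
      exact sub_eq_zero.mp h0
    ext (i | i)
    · simp [hy, mulVec_neg, mulVec_mulVec, hS', Matrix.mul_assoc]
    · simp [hy, mulVec_neg, mulVec_mulVec, Matrix.mul_nonsing_inv_cancel_left _ _ hDdet]

end Aux

section Aux2
variable {d q : ℕ}

noncomputable def schurLift (N : Matrix (Fin q) (Fin d) ℂ) : (Fin d → ℂ) →ₗ[ℂ] (Fin d ⊕ Fin q → ℂ) where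
  toFun x := Sum.elim x (N *ᵥ x)
  map_add' x y := by ext (i | i) <;> simp [mulVec_add]
  map_smul' c x := by ext (i | i) <;> simp [mulVec_smul]

lemma schur_ker_equiv (A : Matrix (Fin d) (Fin d) ℂ) (B : Matrix (Fin d) (Fin q) ℂ)
    (C : Matrix (Fin q) (Fin d) ℂ) (D : Matrix (Fin q) (Fin q) ℂ) (hD : IsUnit D) :
    Module.finrank ℂ (LinearMap.ker (mulVecLin (fromBlocks A B C D)))
      = Module.finrank ℂ (LinearMap.ker (mulVecLin (A - B * D⁻¹ * C))) := by
  set S := A - B * D⁻¹ * C with hS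
  refine LinearEquiv.finrank_eq ?_
  refine LinearEquiv.ofLinear
    (LinearMap.codRestrict _ ((LinearMap.funLeft ℂ ℂ Sum.inl).comp (Submodule.subtype _)) ?_)
    (LinearMap.codRestrict _ ((schurLift (-(D⁻¹ * C))).comp (Submodule.subtype _)) ?_) ?_ ?_
  · rintro ⟨v, hv⟩
    simp only [LinearMap.mem_ker, mulVecLin_apply] at hv ⊢
    exact ((schur_mem_ker_iff A B C D hD v).mp hv).1
  · rintro ⟨x, hx⟩
    simp only [LinearMap.mem_ker, mulVecLin_apply] at hx ⊢
    rw [schur_mem_ker_iff A B C D hD]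
    constructor
    · simpa [schurLift] using hx
    · ext i; simp [schurLift, Matrix.neg_mulVec]
  · ext ⟨x, hx⟩ i
    simp [schurLift]
  · ext ⟨v, hv⟩ i
    simp only [LinearMap.mem_ker, mulVecLin_apply] at hv
    have h2 := ((schur_mem_ker_iff A B C D hD v).mp hv).2
    cases i with
    | inl i => simp [schurLift]
    | inr i =>
      have := congrFun h2 i
      simp only [Function.comp_apply, Pi.neg_apply] at this
      simp [schurLift, Matrix.neg_mulVec, LinearMap.funLeft, ← this]

end Aux2

lemma fromBlocks_sub_smul_one (d q : ℕ)
    (H₁₁ : Matrix (Fin d) (Fin d) ℂ) (H₁₂ : Matrix (Fin d) (Fin q) ℂ)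
    (H₂₁ : Matrix (Fin q) (Fin d) ℂ) (H₂₂ : Matrix (Fin q) (Fin q) ℂ) (lam : ℂ) :
    Matrix.fromBlocks H₁₁ H₁₂ H₂₁ H₂₂ - lam • 1
      = fromBlocks (H₁₁ - lam • 1) H₁₂ H₂₁ (H₂₂ - lam • 1) := by
  ext (i|i) (j|j) <;> simp [fromBlocks, one_apply, Matrix.sub_apply]

/-- **Equality of nullities.**
For `λ` with `H₂₂ - λ•1` invertible, the kernel of `v ↦ (H - λ•1) v` on `ℂ^(d+q)` has the same
dimension as the kernel of `φ ↦ S(λ) φ` on `ℂ^d`: the geometric multiplicity of `λ` as an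
eigenvalue of `H` equals the nullity of the spectral Schur complement `S(λ)`. -/
theorem finrank_ker_eq_finrank_ker_schur
    (d q : ℕ) (hd : 0 < d) (hq : 0 < q)
    (H₁₁ : Matrix (Fin d) (Fin d) ℂ) (H₁₂ : Matrix (Fin d) (Fin q) ℂ)
    (H₂₁ : Matrix (Fin q) (Fin d) ℂ) (H₂₂ : Matrix (Fin q) (Fin q) ℂ)
    (lam : ℂ) (hinv : IsUnit (H₂₂ - lam • 1)) :
    Module.finrank ℂ
        (LinearMap.ker (Matrix.mulVecLin (Matrix.fromBlocks H₁₁ H₁₂ H₂₁ H₂₂ - lam • 1)))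
      = Module.finrank ℂ
        (LinearMap.ker (Matrix.mulVecLin (H₁₁ - lam • 1 - H₁₂ * (H₂₂ - lam • 1)⁻¹ * H₂₁))) := by
  rw [fromBlocks_sub_smul_one]
  exact schur_ker_equiv (H₁₁ - lam • 1) H₁₂ H₂₁ (H₂₂ - lam • 1) hinv
end

section
/- Let H₁₁ be a d×d Hermitian complex matrix, H₁₂ a d×q complex matrix, and H₂₂ a q×q Hermitian complex matrix. Let λ ≤ λ' be real numbers such that every eigenvalue χ of H₂₂ satisfies χ < λ or χ > λ' (so both H₂₂ − λ·1 and H₂₂ − λ'·1 are invertible). Define H_eff(μ) = H₁₁ − H₁₂ · (H₂₂ − μ·1)⁻¹ · H₁₂ᴴ. Then H_eff(λ) − H_eff(λ') is positive semidefinite; i.e., the effective Hamiltonian is operator-monotonically nonincreasing on every interval free of eigenvalues of H₂₂. -/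
/-!
Writing `R(μ) = (H₂₂ - μ)⁻¹`, the two `H₁₁` cancel and the difference is
`H₁₂ (R(λ') - R(λ)) H₁₂ᴴ`, so it suffices that `R(λ) ≤ R(λ')` in the Loewner order. By the
continuous functional calculus `R(μ) = cfc (fun x ↦ (x - μ)⁻¹) H₂₂`, and on the spectrum, which
avoids `[λ, λ']`, the scalar function `(x - λ)⁻¹` is below `(x - λ')⁻¹`: both `x - λ'` and `x - λ`
have the same sign there, and `x - λ'` is the smaller one.
-/

open Matrix
open scoped ComplexOrder MatrixOrder

lemma inv_sub_le_inv_sub {x lam lam' : ℝ} (hle : lam ≤ lam') (hx : x < lam ∨ lam' < x) :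
    (x - lam)⁻¹ ≤ (x - lam')⁻¹ := by
  rcases hx with hx | hx
  · exact (inv_le_inv_of_neg (by linarith) (by linarith)).2 (by linarith)
  · exact inv_anti₀ (by linarith) (by linarith)

lemma continuousOn_inv_sub_const {s : Set ℝ} {μ : ℝ} (hμ : μ ∉ s) :
    ContinuousOn (fun x => (x - μ)⁻¹) s :=
  (continuousOn_id.sub continuousOn_const).inv₀ fun _ hx =>
    sub_ne_zero.2 (ne_of_mem_of_not_mem hx hμ)

section Resolvent

variable {A : Type*} [Ring A] [StarRing A] [TopologicalSpace A] [Algebra ℝ A]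
  [ContinuousFunctionalCalculus ℝ A IsSelfAdjoint] {a : A}

lemma cfc_inv_sub_const {μ : ℝ} (hμ : μ ∉ spectrum ℝ a) (ha : IsSelfAdjoint a := by cfc_tac) :
    cfc (fun x => (x - μ)⁻¹) a = Ring.inverse (a - algebraMap ℝ A μ) := by
  rw [cfc_inv (fun x => x - μ) a (fun x hx h => hμ (sub_eq_zero.mp h ▸ hx)),
    cfc_sub _ _ a, cfc_id' ℝ a, cfc_const μ a]

theorem ringInverse_sub_algebraMap_le [PartialOrder A] [StarOrderedRing A]
    (ha : IsSelfAdjoint a) {lam lam' : ℝ} (hle : lam ≤ lam')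
    (hspec : ∀ x ∈ spectrum ℝ a, x < lam ∨ lam' < x) :
    Ring.inverse (a - algebraMap ℝ A lam) ≤ Ring.inverse (a - algebraMap ℝ A lam') := by
  have hgap : ∀ μ, lam ≤ μ → μ ≤ lam' → μ ∉ spectrum ℝ a := fun μ h₁ h₂ hμ => by
    rcases hspec μ hμ with h | h <;> linarith
  have hlam := hgap lam le_rfl hle
  have hlam' := hgap lam' hle le_rfl
  rw [← cfc_inv_sub_const hlam, ← cfc_inv_sub_const hlam']
  exact cfc_mono (fun x hx => inv_sub_le_inv_sub hle (hspec x hx))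
    (continuousOn_inv_sub_const hlam) (continuousOn_inv_sub_const hlam')

end Resolvent

lemma Matrix.inv_sub_smul_one_eq_ringInverse {n : Type*} [Fintype n] [DecidableEq n]
    (H : Matrix n n ℂ) (μ : ℝ) :
    (H - (μ : ℂ) • 1)⁻¹ = Ring.inverse (H - algebraMap ℝ _ μ) := by
  rw [nonsing_inv_eq_ringInverse, Algebra.algebraMap_eq_smul_one, Complex.coe_smul]

theorem effective_hamiltonian_monotone_general
    (d q : ℕ)
    (H₁₁ : Matrix (Fin d) (Fin d) ℂ)
    (H₁₂ : Matrix (Fin d) (Fin q) ℂ)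
    (H₂₂ : Matrix (Fin q) (Fin q) ℂ) (hH₂₂ : H₂₂.IsHermitian)
    (lam lam' : ℝ) (hle : lam ≤ lam')
    (hspec : ∀ i, hH₂₂.eigenvalues i < lam ∨ lam' < hH₂₂.eigenvalues i) :
    ((H₁₁ - H₁₂ * (H₂₂ - (lam : ℂ) • 1)⁻¹ * H₁₂ᴴ)
      - (H₁₁ - H₁₂ * (H₂₂ - (lam' : ℂ) • 1)⁻¹ * H₁₂ᴴ)).PosSemidef := by
  have hspec' : ∀ x ∈ spectrum ℝ H₂₂, x < lam ∨ lam' < x := by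
    rw [hH₂₂.spectrum_real_eq_range_eigenvalues]
    rintro _ ⟨i, rfl⟩
    exact hspec i
  have hres : (H₂₂ - (lam : ℂ) • 1)⁻¹ ≤ (H₂₂ - (lam' : ℂ) • 1)⁻¹ := by
    simpa only [inv_sub_smul_one_eq_ringInverse] using
      ringInverse_sub_algebraMap_le hH₂₂.isSelfAdjoint hle hspec'
  rw [sub_sub_sub_cancel_left, ← Matrix.sub_mul, ← Matrix.mul_sub]
  exact (le_iff.mp hres).mul_mul_conjTranspose_same H₁₂

/-- **Operator monotonicity of the effective Hamiltonian.**
Let `H₁₁` and `H₂₂` be Hermitian and let `λ ≤ λ'` be real numbers such that every eigenvalue `χ`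
of `H₂₂` satisfies `χ < λ` or `χ > λ'`. Then `H_eff(λ) - H_eff(λ')` is positive semidefinite,
where `H_eff(μ) = H₁₁ - H₁₂ (H₂₂ - μ•1)⁻¹ H₁₂ᴴ`; i.e. the effective Hamiltonian is
operator-monotonically nonincreasing on intervals free of eigenvalues of `H₂₂`. -/
theorem effective_hamiltonian_monotone
    (d q : ℕ)
    (H₁₁ : Matrix (Fin d) (Fin d) ℂ) (hH₁₁ : H₁₁.IsHermitian)
    (H₁₂ : Matrix (Fin d) (Fin q) ℂ)
    (H₂₂ : Matrix (Fin q) (Fin q) ℂ) (hH₂₂ : H₂₂.IsHermitian)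
    (lam lam' : ℝ) (hle : lam ≤ lam')
    (hspec : ∀ i, hH₂₂.eigenvalues i < lam ∨ lam' < hH₂₂.eigenvalues i) :
    ((H₁₁ - H₁₂ * (H₂₂ - (lam : ℂ) • 1)⁻¹ * H₁₂ᴴ)
      - (H₁₁ - H₁₂ * (H₂₂ - (lam' : ℂ) • 1)⁻¹ * H₁₂ᴴ)).PosSemidef :=
  effective_hamiltonian_monotone_general d q H₁₁ H₁₂ H₂₂ hH₂₂ lam lam' hle hspec
end

section
/- Let J ⊆ ℝ be an interval, ξ : ℝ → ℝ a function differentiable on J, and λ, λ_k ∈ J with ξ(λ_k) = λ_k. Let γ ∈ (0,1] and suppose that for every c ∈ J one has (deriv ξ)(c) ≤ 1 − 1/γ². Suppose further there are real numbers ξ̂, ε_root ≥ 0, ε_approx ≥ 0 with |ξ̂ − λ| ≤ ε_root and |ξ̂ − ξ(λ)| ≤ ε_approx. Then |λ − λ_k| ≤ γ² · (ε_root + ε_approx). In particular, if (deriv ξ)(c) ≤ 0 for all c ∈ J (the case γ = 1), then |λ − λ_k| ≤ ε_root + ε_approx. -/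
lemma key_mvt_bound
    (J : Set ℝ) (hJ : J.OrdConnected)
    (ξ : ℝ → ℝ) (hdiff : DifferentiableOn ℝ ξ J)
    (lam lamk : ℝ) (hlam : lam ∈ J) (hlamk : lamk ∈ J)
    (hfix : ξ lamk = lamk)
    (m : ℝ) (hm : 0 < m)
    (hslope : ∀ c ∈ J, deriv ξ c ≤ 1 - m) :
    m * |lam - lamk| ≤ |lam - ξ lam| := by
  rcases eq_or_ne lam lamk with h | h
  · simp [h, hfix, abs_nonneg]
  set a := min lam lamk
  set b := max lam lamk
  have hab : a < b := min_lt_max.2 h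
  have hsub : Set.Icc a b ⊆ J := hJ.uIcc_subset hlam hlamk
  set g : ℝ → ℝ := fun x => x - ξ x with hg
  have hgc : ContinuousOn g (Set.Icc a b) :=
    continuousOn_id.sub ((hdiff.continuousOn.mono hsub))
  have hgd : ∀ x ∈ Set.Ioo a b, HasDerivAt g (1 - deriv ξ x) x := by
    intro x hx
    have hxJ : x ∈ J := hsub (Set.Ioo_subset_Icc_self hx)
    have hd : DifferentiableAt ℝ ξ x := by
      have := (hdiff.mono (Set.Ioo_subset_Icc_self.trans hsub)) x hx
      exact this.differentiableAt (isOpen_Ioo.mem_nhds hx)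
    exact (hasDerivAt_id x).sub hd.hasDerivAt
  obtain ⟨c, hc, hceq⟩ := exists_hasDerivAt_eq_slope g (fun x => 1 - deriv ξ x) hab hgc hgd
  have hcJ : c ∈ J := hsub (Set.Ioo_subset_Icc_self hc)
  have hslopec : m ≤ 1 - deriv ξ c := by linarith [hslope c hcJ]
  have hba : 0 < b - a := sub_pos.2 hab
  have hgb : g b - g a = (1 - deriv ξ c) * (b - a) := by
    rw [eq_div_iff hba.ne'] at hceq
    linarith [hceq]
  have h1 : m * (b - a) ≤ |g b - g a| := by
    rw [hgb, abs_mul]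
    have : (1 - deriv ξ c) * (b - a) ≤ |1 - deriv ξ c| * |b - a| := by
      apply mul_le_mul (le_abs_self _) (le_abs_self _) (le_of_lt hba) (abs_nonneg _)
    calc m * (b - a) ≤ (1 - deriv ξ c) * (b - a) :=
          mul_le_mul_of_nonneg_right hslopec hba.le
      _ ≤ _ := this
  have hglamk : g lamk = 0 := by simp [hg, hfix]
  have h23 : |g b - g a| = |g lam| ∧ |lam - lamk| = b - a := by
    rcases le_total lam lamk with hle | hle
    · have ha : a = lam := min_eq_left hle
      have hb : b = lamk := max_eq_right hle
      constructor
      · rw [ha, hb, hglamk, zero_sub, abs_neg]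
      · rw [ha, hb, abs_of_nonpos (by linarith)]; ring
    · have ha : a = lamk := min_eq_right hle
      have hb : b = lam := max_eq_left hle
      constructor
      · rw [ha, hb, hglamk, sub_zero]
      · rw [ha, hb, abs_of_nonneg (by linarith)]
  obtain ⟨h2, h3⟩ := h23
  rw [h3]
  calc m * (b - a) ≤ |g b - g a| := h1
    _ = |lam - ξ lam| := by rw [h2]

/-- **Root finding with a noisy eigenbranch oracle.**
Let `ξ` be differentiable on an interval `J`, `λ_k ∈ J` a fixed point (`ξ(λ_k) = λ_k`),
`γ ∈ (0,1]` with `ξ'(c) ≤ 1 - 1/γ²` on `J` (the overlap condition `1/(1-ξ'(c)) ≤ γ²`).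
If a noisy oracle value `ξ̂` of `ξ(λ)` satisfies the stopping criterion `|ξ̂ - λ| ≤ ε_root`
and the accuracy bound `|ξ̂ - ξ(λ)| ≤ ε_approx`, then `|λ - λ_k| ≤ γ² (ε_root + ε_approx)`.
In particular, if `ξ' ≤ 0` on `J` (the case `γ = 1`), then `|λ - λ_k| ≤ ε_root + ε_approx`. -/
theorem noisy_root_finding_bound
    (J : Set ℝ) (hJ : J.OrdConnected)
    (ξ : ℝ → ℝ) (hdiff : DifferentiableOn ℝ ξ J)
    (lam lamk : ℝ) (hlam : lam ∈ J) (hlamk : lamk ∈ J)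
    (hfix : ξ lamk = lamk)
    (γ : ℝ) (hγ0 : 0 < γ) (hγ1 : γ ≤ 1)
    (hslope : ∀ c ∈ J, deriv ξ c ≤ 1 - 1 / γ ^ 2)
    (ξhat εroot εapprox : ℝ) (hεroot : 0 ≤ εroot) (hεapprox : 0 ≤ εapprox)
    (hstop : |ξhat - lam| ≤ εroot) (hacc : |ξhat - ξ lam| ≤ εapprox) :
    |lam - lamk| ≤ γ ^ 2 * (εroot + εapprox) ∧
    ((∀ c ∈ J, deriv ξ c ≤ 0) → |lam - lamk| ≤ εroot + εapprox) := by
  have hres : |lam - ξ lam| ≤ εroot + εapprox := by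
    calc |lam - ξ lam| = |(lam - ξhat) + (ξhat - ξ lam)| := by ring_nf
      _ ≤ |lam - ξhat| + |ξhat - ξ lam| := abs_add_le _ _
      _ ≤ εroot + εapprox := by
          rw [abs_sub_comm]; exact add_le_add hstop hacc
  have hγ2 : 0 < γ ^ 2 := by positivity
  constructor
  · have hk := key_mvt_bound J hJ ξ hdiff lam lamk hlam hlamk hfix (1 / γ ^ 2)
      (by positivity) hslope
    rw [div_mul_eq_mul_div, one_mul, div_le_iff₀ hγ2] at hk
    calc |lam - lamk| ≤ |lam - ξ lam| * γ ^ 2 := hk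
      _ ≤ (εroot + εapprox) * γ ^ 2 := mul_le_mul_of_nonneg_right hres hγ2.le
      _ = γ ^ 2 * (εroot + εapprox) := mul_comm _ _
  · intro hs
    have hk := key_mvt_bound J hJ ξ hdiff lam lamk hlam hlamk hfix 1 one_pos
      (fun c hc => by linarith [hs c hc])
    rw [one_mul] at hk
    exact hk.trans hres
end

section
/- Let H = fromBlocks H₁₁ H₁₂ H₂₁ H₂₂ be an (d+q)×(d+q) Hermitian complex block matrix (H₁₁ᴴ = H₁₁, H₂₂ᴴ = H₂₂, H₂₁ = H₁₂ᴴ), let λ ∈ ℝ, set A = H₂₂ − λ·1, and let F be a Hermitian q×q matrix commuting with A (F·A = A·F). Define Ω̃ = fromBlocks 1 0 (−F·H₁₂ᴴ) 1, H̃_eff = H₁₁ − H₁₂·F·H₁₂ᴴ, R₁₂ = H₁₂·(1 − F·A), R₂₁ = (1 − A·F)·H₁₂ᴴ, and R₁₁ = −R₁₂·F·H₁₂ᴴ. Then the rotated eigenproblem identity holds: Ω̃ᴴ · (H − λ·1) · Ω̃ = fromBlocks (H̃_eff − λ·1 + R₁₁) R₁₂ R₂₁ A. -/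
open Matrix

/-- **Rotated eigenproblem with the approximate wave operator.**
Let `H = fromBlocks H₁₁ H₁₂ H₁₂ᴴ H₂₂` be Hermitian, `λ ∈ ℝ`, `A = H₂₂ - λ•1`, and let `F` be a
Hermitian matrix commuting with `A`. With `Ω̃ = fromBlocks 1 0 (-F H₁₂ᴴ) 1`,
`H̃_eff = H₁₁ - H₁₂ F H₁₂ᴴ`, `R₁₂ = H₁₂ (1 - F A)`, `R₂₁ = (1 - A F) H₁₂ᴴ` and
`R₁₁ = -R₁₂ F H₁₂ᴴ`, one has
`Ω̃ᴴ (H - λ•1) Ω̃ = fromBlocks (H̃_eff - λ•1 + R₁₁) R₁₂ R₂₁ A`. -/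
theorem rotated_eigenproblem_identity
    (d q : ℕ)
    (H₁₁ : Matrix (Fin d) (Fin d) ℂ) (H₁₂ : Matrix (Fin d) (Fin q) ℂ)
    (H₂₁ : Matrix (Fin q) (Fin d) ℂ) (H₂₂ : Matrix (Fin q) (Fin q) ℂ)
    (hH₁₁ : H₁₁ᴴ = H₁₁) (hH₂₂ : H₂₂ᴴ = H₂₂) (hH₂₁ : H₂₁ = H₁₂ᴴ)
    (lam : ℝ) (F : Matrix (Fin q) (Fin q) ℂ) (hF : Fᴴ = F)
    (hcomm : F * (H₂₂ - (lam : ℂ) • 1) = (H₂₂ - (lam : ℂ) • 1) * F) :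
    (Matrix.fromBlocks (1 : Matrix (Fin d) (Fin d) ℂ) (0 : Matrix (Fin d) (Fin q) ℂ)
        (-(F * H₁₂ᴴ)) (1 : Matrix (Fin q) (Fin q) ℂ))ᴴ
      * (Matrix.fromBlocks H₁₁ H₁₂ H₂₁ H₂₂ - (lam : ℂ) • 1)
      * (Matrix.fromBlocks (1 : Matrix (Fin d) (Fin d) ℂ) (0 : Matrix (Fin d) (Fin q) ℂ)
        (-(F * H₁₂ᴴ)) (1 : Matrix (Fin q) (Fin q) ℂ))
    = Matrix.fromBlocks
        (H₁₁ - H₁₂ * F * H₁₂ᴴ - (lam : ℂ) • 1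
          + -(H₁₂ * (1 - F * (H₂₂ - (lam : ℂ) • 1)) * F * H₁₂ᴴ))
        (H₁₂ * (1 - F * (H₂₂ - (lam : ℂ) • 1)))
        ((1 - (H₂₂ - (lam : ℂ) • 1) * F) * H₁₂ᴴ)
        (H₂₂ - (lam : ℂ) • 1) := by
  subst hH₂₁
  have h1 : ((lam : ℂ) • (1 : Matrix (Fin d ⊕ Fin q) (Fin d ⊕ Fin q) ℂ))
      = Matrix.fromBlocks ((lam : ℂ) • 1) 0 0 ((lam : ℂ) • 1) := by
    rw [← Matrix.fromBlocks_one, Matrix.fromBlocks_smul]; simp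
  rw [Matrix.fromBlocks_conjTranspose, h1, sub_eq_add_neg, Matrix.fromBlocks_neg,
    Matrix.fromBlocks_add, Matrix.fromBlocks_multiply, Matrix.fromBlocks_multiply]
  refine Matrix.fromBlocks_inj.mpr ⟨?_, ?_, ?_, ?_⟩
  · simp only [Matrix.conjTranspose_neg, Matrix.conjTranspose_mul, hF,
      Matrix.conjTranspose_conjTranspose, Matrix.conjTranspose_one, Matrix.conjTranspose_zero]
    simp only [Matrix.mul_sub, Matrix.sub_mul, Matrix.mul_add, Matrix.add_mul, Matrix.mul_one,
      Matrix.one_mul, Matrix.neg_mul, Matrix.mul_neg, Matrix.mul_zero, Matrix.zero_mul,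
      add_zero, zero_add, neg_zero, neg_neg, Matrix.mul_assoc, sub_eq_add_neg]
    try abel
  · simp only [Matrix.conjTranspose_neg, Matrix.conjTranspose_mul, hF,
      Matrix.conjTranspose_conjTranspose, Matrix.conjTranspose_one, Matrix.conjTranspose_zero]
    simp only [Matrix.mul_sub, Matrix.sub_mul, Matrix.mul_add, Matrix.add_mul, Matrix.mul_one,
      Matrix.one_mul, Matrix.neg_mul, Matrix.mul_neg, Matrix.mul_zero, Matrix.zero_mul,
      add_zero, zero_add, neg_zero, neg_neg, Matrix.mul_assoc, sub_eq_add_neg]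
    try abel
  · simp only [Matrix.conjTranspose_neg, Matrix.conjTranspose_mul, hF,
      Matrix.conjTranspose_conjTranspose, Matrix.conjTranspose_one, Matrix.conjTranspose_zero]
    simp only [Matrix.mul_sub, Matrix.sub_mul, Matrix.mul_add, Matrix.add_mul, Matrix.mul_one,
      Matrix.one_mul, Matrix.neg_mul, Matrix.mul_neg, Matrix.mul_zero, Matrix.zero_mul,
      add_zero, zero_add, neg_zero, neg_neg, Matrix.mul_assoc, sub_eq_add_neg]
    try abel
  · simp [sub_eq_add_neg]
end

section
/- Let H be an N×N Hermitian complex matrix, λ ∈ ℝ, and Δ > 0. Let A⊥ be an N×p complex matrix with orthonormal columns (A⊥ᴴA⊥ = 1) such that H·A⊥ = A⊥·Λ⊥ for a real diagonal p×p matrix Λ⊥ whose diagonal entries all satisfy |Λ⊥_jj − λ| ≥ Δ. Let B be an N×m complex matrix with orthonormal columns (BᴴB = 1) and define the residual E = H·B − λ·B. Then the overlap with the out-of-manifold eigenspace is bounded by ‖A⊥ᴴ·B‖ ≤ ‖E‖/Δ, where ‖·‖ denotes the ℓ²-operator norm of a matrix. -/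
/-!
Project the residual onto the out-of-manifold eigenvectors: since `H` is Hermitian,
`A⊥ᴴ H = Λ⊥ A⊥ᴴ`, hence `A⊥ᴴ E = (Λ⊥ - λ) A⊥ᴴ B`. The diagonal factor `Λ⊥ - λ` is invertible
with inverse of norm at most `1 / Δ`, and `‖A⊥ᴴ‖ ≤ 1` because its rows are orthonormal.
-/

open Matrix
open scoped Matrix.Norms.L2Operator

namespace Matrix

variable {𝕜 : Type*} [RCLike 𝕜] {l m n : Type*} [Fintype m] [Fintype n]

lemma l2_opNorm_diagonal_le [DecidableEq n] {v : n → 𝕜} {c : ℝ} (hc : 0 ≤ c)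
    (hv : ∀ i, ‖v i‖ ≤ c) : ‖diagonal v‖ ≤ c := by
  rw [l2_opNorm_diagonal]
  exact (pi_norm_le_iff_of_nonneg hc).2 hv

lemma l2_opNorm_one_le [DecidableEq n] : ‖(1 : Matrix n n 𝕜)‖ ≤ 1 :=
  l2_opNorm_diagonal_le zero_le_one fun _ => norm_one.le

lemma l2_opNorm_le_one_of_conjTranspose_mul_self_eq_one [DecidableEq n] {A : Matrix m n 𝕜}
    (hA : Aᴴ * A = 1) : ‖A‖ ≤ 1 := by
  have h := l2_opNorm_conjTranspose_mul_self A
  rw [hA] at h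
  nlinarith [l2_opNorm_one_le (n := n) (𝕜 := 𝕜), norm_nonneg A]

lemma l2_opNorm_le_l2_opNorm_diagonal_mul_div [DecidableEq m] [DecidableEq n] {d : n → 𝕜}
    {Δ : ℝ} (hΔ : 0 < Δ) (hd : ∀ i, Δ ≤ ‖d i‖) (X : Matrix n m 𝕜) :
    ‖X‖ ≤ ‖diagonal d * X‖ / Δ := by
  have hd0 : ∀ i, d i ≠ 0 := fun i => norm_pos_iff.1 (hΔ.trans_le (hd i))
  have hinv : diagonal d⁻¹ * diagonal d = 1 := by
    rw [diagonal_mul_diagonal, ← diagonal_one]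
    exact congrArg diagonal (funext fun i => inv_mul_cancel₀ (hd0 i))
  have hinv_norm : ‖diagonal d⁻¹‖ ≤ Δ⁻¹ := l2_opNorm_diagonal_le (by positivity) fun i => by
    rw [Pi.inv_apply, norm_inv]
    exact inv_anti₀ hΔ (hd i)
  calc ‖X‖ = ‖diagonal d⁻¹ * (diagonal d * X)‖ := by
        rw [← Matrix.mul_assoc, hinv, Matrix.one_mul]
    _ ≤ ‖diagonal d⁻¹‖ * ‖diagonal d * X‖ := l2_opNorm_mul _ _
    _ ≤ Δ⁻¹ * ‖diagonal d * X‖ := by gcongr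
    _ = ‖diagonal d * X‖ / Δ := inv_mul_eq_div _ _

namespace IsHermitian

variable [DecidableEq m] {H : Matrix n n 𝕜} {A : Matrix n m 𝕜} {d : m → 𝕜}

lemma conjTranspose_mul_eq_diagonal_mul (hH : H.IsHermitian) (hA : H * A = A * diagonal d) :
    Aᴴ * H = diagonal (star d) * Aᴴ := by
  simpa [conjTranspose_mul, hH.eq, diagonal_conjTranspose] using congrArg (·ᴴ) hA

lemma conjTranspose_mul_sub_smul_eq_diagonal_mul (hH : H.IsHermitian)
    (hA : H * A = A * diagonal d) (μ : 𝕜) (B : Matrix n l 𝕜) :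
    Aᴴ * (H * B - μ • B) = diagonal (fun j => star (d j) - μ) * (Aᴴ * B) := by
  rw [Matrix.mul_sub, ← Matrix.mul_assoc, hH.conjTranspose_mul_eq_diagonal_mul hA,
    Matrix.mul_assoc, Matrix.mul_smul]
  ext i j
  simp [diagonal_mul, sub_mul]

end IsHermitian

end Matrix

theorem out_of_manifold_overlap_bound_general
    (N p m : ℕ)
    (H : Matrix (Fin N) (Fin N) ℂ) (hH : H.IsHermitian)
    (lam Δ : ℝ) (hΔ : 0 < Δ)
    (Aperp : Matrix (Fin N) (Fin p) ℂ) (hAperp : Aperpᴴ * Aperp = 1)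
    (Λperp : Fin p → ℝ)
    (heig : H * Aperp = Aperp * Matrix.diagonal (fun j => (Λperp j : ℂ)))
    (hgap : ∀ j, Δ ≤ |Λperp j - lam|)
    (B : Matrix (Fin N) (Fin m) ℂ) :
    ‖Aperpᴴ * B‖ ≤ ‖H * B - (lam : ℂ) • B‖ / Δ := by
  have hA : ‖Aperpᴴ‖ ≤ 1 := by
    rw [l2_opNorm_conjTranspose]
    exact l2_opNorm_le_one_of_conjTranspose_mul_self_eq_one hAperp
  calc ‖Aperpᴴ * B‖
      ≤ ‖diagonal (fun j => star (Λperp j : ℂ) - lam) * (Aperpᴴ * B)‖ / Δ := by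
        refine l2_opNorm_le_l2_opNorm_diagonal_mul_div hΔ (fun j => ?_) _
        rw [Complex.star_def, Complex.conj_ofReal, ← Complex.ofReal_sub, Complex.norm_real,
          Real.norm_eq_abs]
        exact hgap j
    _ = ‖Aperpᴴ * (H * B - (lam : ℂ) • B)‖ / Δ := by
        rw [hH.conjTranspose_mul_sub_smul_eq_diagonal_mul heig]
    _ ≤ ‖Aperpᴴ‖ * ‖H * B - (lam : ℂ) • B‖ / Δ := by gcongr; exact l2_opNorm_mul _ _
    _ ≤ ‖H * B - (lam : ℂ) • B‖ / Δ := by gcongr; exact mul_le_of_le_one_left (norm_nonneg _) hA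

/-- **Out-of-manifold overlap bound.**
Let `H` be Hermitian, and let the columns of `A⊥` be orthonormal eigenvectors of `H`
(`H A⊥ = A⊥ Λ⊥`, `Λ⊥` real diagonal) whose eigenvalues satisfy `|Λ⊥_jj - λ| ≥ Δ > 0`.
If `B` has orthonormal columns and residual `E = H B - λ B`, then `‖A⊥ᴴ B‖ ≤ ‖E‖ / Δ`
in the `ℓ²` operator norm. -/
theorem out_of_manifold_overlap_bound
    (N p m : ℕ)
    (H : Matrix (Fin N) (Fin N) ℂ) (hH : H.IsHermitian)
    (lam Δ : ℝ) (hΔ : 0 < Δ)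
    (Aperp : Matrix (Fin N) (Fin p) ℂ) (hAperp : Aperpᴴ * Aperp = 1)
    (Λperp : Fin p → ℝ)
    (heig : H * Aperp = Aperp * Matrix.diagonal (fun j => (Λperp j : ℂ)))
    (hgap : ∀ j, Δ ≤ |Λperp j - lam|)
    (B : Matrix (Fin N) (Fin m) ℂ) (hB : Bᴴ * B = 1) :
    ‖Aperpᴴ * B‖ ≤ ‖H * B - (lam : ℂ) • B‖ / Δ :=
  out_of_manifold_overlap_bound_general N p m H hH lam Δ hΔ Aperp hAperp Λperp heig hgap B
end

section
/- Let H be an N×N Hermitian complex matrix, λ ∈ ℝ, and Δ > 0. Let A be an N×m matrix and A⊥ an N×p matrix with AᴴA = 1, A⊥ᴴA⊥ = 1, A·Aᴴ + A⊥·A⊥ᴴ = 1, and H·A⊥ = A⊥·Λ⊥ for a real diagonal matrix Λ⊥ with |Λ⊥_jj − λ| ≥ Δ for every j. Let B be an N×m matrix with BᴴB = 1 and residual E = H·B − λ·B. Then for every unit vector c ∈ ℂ^m, the state Bc satisfies ‖Aᴴ·(B·c)‖² ≥ 1 − ‖E‖²/Δ²; consequently the worst-case subspace fidelity obeys F_min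 ≥ 1 − (‖E‖/Δ)². -/
open Matrix
open scoped Matrix.Norms.L2Operator

/-- The Euclidean (ℓ²) norm of a complex vector. -/
noncomputable def enorm2 {n : Type*} [Fintype n] (v : n → ℂ) : ℝ :=
  ‖(EuclideanSpace.equiv n ℂ).symm v‖

/-!
Write `v = B c` (a unit vector, since `Bᴴ B = 1`). Because `H A⊥ = A⊥ Λ⊥` and `H` is Hermitian,
`A⊥ᴴ (E c) = (Λ⊥ - λ) (A⊥ᴴ v)`, so the gap gives `Δ ‖A⊥ᴴ v‖ ≤ ‖A⊥ᴴ E c‖ ≤ ‖E c‖ ≤ ‖E‖`.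
The completeness relation `A Aᴴ + A⊥ A⊥ᴴ = 1` splits `‖v‖² = ‖Aᴴ v‖² + ‖A⊥ᴴ v‖²`, whence
`‖Aᴴ v‖² ≥ 1 - ‖E‖² / Δ²`.
-/

section Norms

variable {n k l : Type*} [Fintype n] [Fintype k] [Fintype l]

lemma enorm2_nonneg (x : n → ℂ) : 0 ≤ enorm2 x := norm_nonneg _

lemma enorm2_sq (x : n → ℂ) : enorm2 x ^ 2 = ∑ i, ‖x i‖ ^ 2 := by
  simp [enorm2, EuclideanSpace.norm_eq, Real.sq_sqrt (Finset.sum_nonneg fun i _ => sq_nonneg _)]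

lemma star_dotProduct_self_eq_enorm2_sq (x : n → ℂ) :
    star x ⬝ᵥ x = ((enorm2 x ^ 2 : ℝ) : ℂ) := by
  rw [enorm2_sq]
  push_cast
  simp only [dotProduct, Pi.star_apply, Complex.star_def, Complex.conj_mul']

lemma enorm2_mulVec_sq (M : Matrix n k ℂ) (x : k → ℂ) :
    ((enorm2 (M *ᵥ x) ^ 2 : ℝ) : ℂ) = star x ⬝ᵥ ((Mᴴ * M) *ᵥ x) := by
  rw [← star_dotProduct_self_eq_enorm2_sq, star_mulVec, ← mulVec_mulVec,
    dotProduct_mulVec (star x)]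

lemma enorm2_conjTranspose_mulVec_sq (M : Matrix k n ℂ) (x : k → ℂ) :
    ((enorm2 (Mᴴ *ᵥ x) ^ 2 : ℝ) : ℂ) = star x ⬝ᵥ ((M * Mᴴ) *ᵥ x) := by
  simpa using enorm2_mulVec_sq Mᴴ x

lemma enorm2_mulVec_of_conjTranspose_mul_self_eq_one [DecidableEq k] {M : Matrix n k ℂ}
    (hM : Mᴴ * M = 1) (x : k → ℂ) : enorm2 (M *ᵥ x) = enorm2 x := by
  have h := enorm2_mulVec_sq M x
  rw [hM, one_mulVec, star_dotProduct_self_eq_enorm2_sq] at h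
  exact (pow_left_inj₀ (enorm2_nonneg _) (enorm2_nonneg _) two_ne_zero).mp (mod_cast h)

lemma enorm2_mulVec_le_opNorm_mul [DecidableEq k] (M : Matrix n k ℂ) (x : k → ℂ) :
    enorm2 (M *ᵥ x) ≤ ‖M‖ * enorm2 x :=
  l2_opNorm_mulVec M ((EuclideanSpace.equiv k ℂ).symm x)

lemma enorm2_diagonal_mulVec_sq_ge [DecidableEq k] {Δ : ℝ} {d : k → ℂ} (hΔ : 0 ≤ Δ)
    (hd : ∀ j, Δ ≤ ‖d j‖) (w : k → ℂ) : Δ ^ 2 * enorm2 w ^ 2 ≤ enorm2 (diagonal d *ᵥ w) ^ 2 := by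
  simp only [enorm2_sq, mulVec_diagonal, norm_mul, mul_pow, Finset.mul_sum]
  gcongr with j
  exact hd j

lemma enorm2_conjTranspose_mulVec_sq_add [DecidableEq n] {A : Matrix n k ℂ} {P : Matrix n l ℂ}
    (hcomplete : A * Aᴴ + P * Pᴴ = 1) (x : n → ℂ) :
    enorm2 (Aᴴ *ᵥ x) ^ 2 + enorm2 (Pᴴ *ᵥ x) ^ 2 = enorm2 x ^ 2 := by
  have h : star x ⬝ᵥ ((A * Aᴴ + P * Pᴴ) *ᵥ x) = star x ⬝ᵥ x := by rw [hcomplete, one_mulVec]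
  rw [add_mulVec, dotProduct_add, ← enorm2_conjTranspose_mulVec_sq,
    ← enorm2_conjTranspose_mulVec_sq, star_dotProduct_self_eq_enorm2_sq] at h
  exact_mod_cast h

end Norms

section Eigenvectors

variable {n p k : Type*} [Fintype n] [Fintype p] [DecidableEq p]
  {H : Matrix n n ℂ} {P : Matrix n p ℂ} {Λ : p → ℝ}

lemma Matrix.IsHermitian.conjTranspose_mul_eq_diagonal_mul_s16 (hH : H.IsHermitian)
    (heig : H * P = P * diagonal (fun j => (Λ j : ℂ))) :
    Pᴴ * H = diagonal (fun j => (Λ j : ℂ)) * Pᴴ := by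
  simpa [conjTranspose_mul, hH.eq, diagonal_conjTranspose, Pi.star_def] using
    congrArg (·ᴴ) heig

lemma Matrix.IsHermitian.conjTranspose_mul_residual (hH : H.IsHermitian)
    (heig : H * P = P * diagonal (fun j => (Λ j : ℂ))) (B : Matrix n k ℂ) (lam : ℂ) :
    Pᴴ * (H * B - lam • B) = diagonal (fun j => (Λ j : ℂ) - lam) * (Pᴴ * B) := by
  rw [Matrix.mul_sub, Matrix.mul_smul, ← Matrix.mul_assoc,
    hH.conjTranspose_mul_eq_diagonal_mul_s16 heig, Matrix.mul_assoc, smul_eq_diagonal_mul,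
    ← Matrix.sub_mul, ← diagonal_sub]

end Eigenvectors

theorem worst_case_subspace_fidelity_general
    (N m p : ℕ)
    (H : Matrix (Fin N) (Fin N) ℂ) (hH : H.IsHermitian)
    (lam Δ : ℝ) (hΔ : 0 < Δ)
    (A : Matrix (Fin N) (Fin m) ℂ) (Aperp : Matrix (Fin N) (Fin p) ℂ)
    (hcomplete : A * Aᴴ + Aperp * Aperpᴴ = 1)
    (Λperp : Fin p → ℝ)
    (heig : H * Aperp = Aperp * Matrix.diagonal (fun j => (Λperp j : ℂ)))
    (hgap : ∀ j, Δ ≤ |Λperp j - lam|)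
    (B : Matrix (Fin N) (Fin m) ℂ) (hB : Bᴴ * B = 1)
    (c : Fin m → ℂ) (hc : enorm2 c = 1) :
    1 - ‖H * B - (lam : ℂ) • B‖ ^ 2 / Δ ^ 2 ≤ enorm2 (Aᴴ *ᵥ (B *ᵥ c)) ^ 2 := by
  set E := H * B - (lam : ℂ) • B
  set v := B *ᵥ c
  have hv : enorm2 v = 1 := by rw [enorm2_mulVec_of_conjTranspose_mul_self_eq_one hB, hc]
  have hdist : ∀ j, Δ ≤ ‖(Λperp j : ℂ) - lam‖ := fun j => by
    simpa [← Complex.ofReal_sub, Complex.norm_real] using hgap j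
  have hEc : enorm2 (E *ᵥ c) ≤ ‖E‖ := by simpa [hc] using enorm2_mulVec_le_opNorm_mul E c
  have hperp : Δ ^ 2 * enorm2 (Aperpᴴ *ᵥ v) ^ 2 ≤ ‖E‖ ^ 2 := calc
    _ ≤ enorm2 (diagonal (fun j => (Λperp j : ℂ) - lam) *ᵥ (Aperpᴴ *ᵥ v)) ^ 2 :=
      enorm2_diagonal_mulVec_sq_ge hΔ.le hdist _
    _ = enorm2 (Aperpᴴ *ᵥ (E *ᵥ c)) ^ 2 := by
      rw [mulVec_mulVec, mulVec_mulVec, mulVec_mulVec, hH.conjTranspose_mul_residual heig,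
        Matrix.mul_assoc]
    _ ≤ enorm2 (E *ᵥ c) ^ 2 := by
      linarith [enorm2_conjTranspose_mulVec_sq_add hcomplete (E *ᵥ c),
        sq_nonneg (enorm2 (Aᴴ *ᵥ (E *ᵥ c)))]
    _ ≤ ‖E‖ ^ 2 := pow_le_pow_left₀ (enorm2_nonneg _) hEc 2
  have hsplit := enorm2_conjTranspose_mulVec_sq_add hcomplete v
  rw [hv, one_pow] at hsplit
  have hperp' : enorm2 (Aperpᴴ *ᵥ v) ^ 2 ≤ ‖E‖ ^ 2 / Δ ^ 2 := by
    rw [le_div_iff₀ (by positivity)]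
    linarith
  linarith

/-- **Worst-case subspace fidelity bound.**
Let `H` be Hermitian, let the columns of `A` (orthonormal) span the exact quasi-degenerate
eigenspace and the columns of `A⊥` (orthonormal, completing `A` to an orthonormal basis:
`A Aᴴ + A⊥ A⊥ᴴ = 1`) be eigenvectors of `H` with eigenvalues at distance at least `Δ > 0`
from `λ`. If `B` has orthonormal columns and residual `E = H B - λ B`, then for every unit
vector `c`, `‖Aᴴ B c‖² ≥ 1 - ‖E‖²/Δ²`; consequently `F_min ≥ 1 - (‖E‖/Δ)²`. -/
theorem worst_case_subspace_fidelity
    (N m p : ℕ)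
    (H : Matrix (Fin N) (Fin N) ℂ) (hH : H.IsHermitian)
    (lam Δ : ℝ) (hΔ : 0 < Δ)
    (A : Matrix (Fin N) (Fin m) ℂ) (Aperp : Matrix (Fin N) (Fin p) ℂ)
    (hA : Aᴴ * A = 1) (hAperp : Aperpᴴ * Aperp = 1)
    (hcomplete : A * Aᴴ + Aperp * Aperpᴴ = 1)
    (Λperp : Fin p → ℝ)
    (heig : H * Aperp = Aperp * Matrix.diagonal (fun j => (Λperp j : ℂ)))
    (hgap : ∀ j, Δ ≤ |Λperp j - lam|)
    (B : Matrix (Fin N) (Fin m) ℂ) (hB : Bᴴ * B = 1)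
    (c : Fin m → ℂ) (hc : enorm2 c = 1) :
    1 - ‖H * B - (lam : ℂ) • B‖ ^ 2 / Δ ^ 2 ≤ enorm2 (Aᴴ *ᵥ (B *ᵥ c)) ^ 2 :=
  worst_case_subspace_fidelity_general N m p H hH lam Δ hΔ A Aperp hcomplete Λperp heig hgap B hB c
    hc
end
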